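/- If n ≥ 2 is an integer with Ω(n) = k (so k ≥ 1), then 2 ≤ |g⁻¹(n)| ≤ ∑_{j=0}^{k} binom(k, j) · j!. -/

import Mathlib

/-!
Let `P` be the indicator function of the primes. Since `∑_{d ∣ n} P(d) = ω(n)`, we have
`g = (1 + P) * ζ`, hence `g⁻¹ = μ * (1 + P)⁻¹`. The inverse of `1 + P` is `(-1)^Ω(n) M(n)`,
where `M(n)` counts the ordered factorisations of `n` into primes, because
`M(n) = ∑_{p ∣ n} M(n / p)`. For squarefree `d` the signs of `μ(d)` and `(-1)^Ω(n/d)` combine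
to `(-1)^Ω(n)`, so `|g⁻¹(n)| = ∑_{d ∣ n squarefree} M(n / d)`. The terms `d = 1` and `d = p`
give the lower bound `2`; for the upper bound, `M(m) ≤ Ω(m)!` and the squarefree divisors of
`n` are the products of the subsets of its `ω(n) ≤ Ω(n)` prime factors.
-/

open Finset
open scoped ArithmeticFunction.omega ArithmeticFunction.Omega ArithmeticFunction.Moebius
  ArithmeticFunction.zeta Nat

namespace ArithmeticFunction

theorem cardDistinctFactors_eq_card_primeFactors (n : ℕ) : ω n = #n.primeFactors := by
  rw [cardDistinctFactors_apply, ← List.card_toFinset, Nat.toFinset_factors]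

theorem cardDistinctFactors_le_cardFactors (n : ℕ) : ω n ≤ Ω n :=
  (List.dedup_sublist _).length_le

theorem cardFactors_div_add_cardFactors {n d : ℕ} (hn : n ≠ 0) (hd : d ∣ n) :
    Ω (n / d) + Ω d = Ω n := by
  obtain ⟨m, rfl⟩ := hd
  have hd0 : d ≠ 0 := left_ne_zero_of_mul hn
  rw [Nat.mul_div_cancel_left m (Nat.pos_of_ne_zero hd0), add_comm,
    cardFactors_mul hd0 (right_ne_zero_of_mul hn)]

theorem cardFactors_div_add_one {n p : ℕ} (hp : p ∈ n.primeFactors) :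
    Ω (n / p) + 1 = Ω n := by
  rw [← cardFactors_apply_prime (Nat.prime_of_mem_primeFactors hp)]
  exact cardFactors_div_add_cardFactors (Nat.mem_primeFactors.1 hp).2.2
    (Nat.dvd_of_mem_primeFactors hp)

theorem cardFactors_prod_of_prime {s : Finset ℕ} (hs : ∀ p ∈ s, p.Prime) :
    Ω s.val.prod = #s := by
  rw [cardFactors_multiset_prod (Multiset.prod_ne_zero fun h => Nat.not_prime_zero (hs 0 h)),
    Multiset.map_congr rfl fun p hp => cardFactors_apply_prime (hs p hp)]
  simp

/-- The number of ways to write `n ≥ 1` as an ordered product of primes. -/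
def orderedPrimeFactorizations (n : ℕ) : ℕ :=
  if n ≤ 1 then 1 else ∑ p ∈ n.primeFactors.attach, orderedPrimeFactorizations (n / p.1)
decreasing_by
  exact Nat.div_lt_self (by omega) (Nat.prime_of_mem_primeFactors p.2).one_lt

local notation "M" => orderedPrimeFactorizations

theorem orderedPrimeFactorizations_of_le_one {n : ℕ} (h : n ≤ 1) : M n = 1 := by
  rw [orderedPrimeFactorizations, if_pos h]

theorem orderedPrimeFactorizations_of_one_lt {n : ℕ} (h : 1 < n) :
    M n = ∑ p ∈ n.primeFactors, M (n / p) := by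
  rw [orderedPrimeFactorizations, if_neg (by omega), sum_attach _ fun p => M (n / p)]

theorem orderedPrimeFactorizations_pos (n : ℕ) : 0 < M n := by
  induction n using Nat.strong_induction_on with
  | _ n ih =>
    rcases le_or_gt n 1 with h | h
    · simp [orderedPrimeFactorizations_of_le_one h]
    · obtain ⟨p, hp⟩ := Nat.nonempty_primeFactors.2 h
      rw [orderedPrimeFactorizations_of_one_lt h]
      exact sum_pos' (fun _ _ => Nat.zero_le _)
        ⟨p, hp, ih _ (Nat.div_lt_self (by omega) (Nat.prime_of_mem_primeFactors hp).one_lt)⟩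

theorem orderedPrimeFactorizations_le_factorial (n : ℕ) : M n ≤ (Ω n)! := by
  induction n using Nat.strong_induction_on with
  | _ n ih =>
    rcases le_or_gt n 1 with h | h
    · rw [orderedPrimeFactorizations_of_le_one h]
      exact Nat.one_le_iff_ne_zero.2 (Nat.factorial_ne_zero _)
    have hΩ : Ω n ≠ 0 := (cardFactors_pos_iff_one_lt.2 h).ne'
    have hdiv : ∀ p ∈ n.primeFactors, Ω (n / p) = Ω n - 1 := fun p hp => by
      have := cardFactors_div_add_one hp
      omega
    calc M n = ∑ p ∈ n.primeFactors, M (n / p) := orderedPrimeFactorizations_of_one_lt h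
      _ ≤ ∑ _p ∈ n.primeFactors, (Ω n - 1)! := sum_le_sum fun p hp => by
          rw [← hdiv p hp]
          exact ih _ (Nat.div_lt_self (by omega) (Nat.prime_of_mem_primeFactors hp).one_lt)
      _ = ω n * (Ω n - 1)! := by
          rw [sum_const, smul_eq_mul, cardDistinctFactors_eq_card_primeFactors]
      _ ≤ Ω n * (Ω n - 1)! := Nat.mul_le_mul_right _ (cardDistinctFactors_le_cardFactors n)
      _ = (Ω n)! := Nat.mul_factorial_pred hΩ

theorem sum_powerset_factorial_sub_card_le {α : Type*} {T : Finset α} {k : ℕ} (hT : #T ≤ k) :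
    ∑ s ∈ T.powerset, (k - #s)! ≤ ∑ j ∈ range (k + 1), k.choose j * j ! := by
  calc ∑ s ∈ T.powerset, (k - #s)!
      = ∑ j ∈ range (#T + 1), (#T).choose j * (k - j)! := by
        rw [sum_powerset]
        refine sum_congr rfl fun j _ => ?_
        rw [sum_congr rfl fun s hs => by rw [(mem_powersetCard.1 hs).2], sum_const,
          card_powersetCard, smul_eq_mul]
    _ ≤ ∑ j ∈ range (k + 1), k.choose j * (k - j)! :=
        (sum_le_sum fun j _ => Nat.mul_le_mul_right _ (Nat.choose_le_choose j hT)).trans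
          (sum_le_sum_of_subset (range_subset_range.2 (by omega)))
    _ = ∑ j ∈ range (k + 1), k.choose j * j ! := by
        rw [← sum_range_reflect]
        refine sum_congr rfl fun j hj => ?_
        have hjk : j ≤ k := Nat.lt_succ_iff.1 (mem_range.1 hj)
        rw [Nat.add_sub_cancel, ← Nat.choose_symm hjk, Nat.sub_sub_self hjk]

theorem sum_squarefree_divisors_orderedPrimeFactorizations_le {n : ℕ} (hn : n ≠ 0) :
    ∑ d ∈ n.divisors with Squarefree d, M (n / d)
      ≤ ∑ j ∈ range (Ω n + 1), (Ω n).choose j * j ! := by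
  rw [Nat.sum_divisors_filter_squarefree hn, Nat.factors_eq, List.toFinset_coe,
    Nat.toFinset_factors]
  refine le_trans (sum_le_sum fun s hs => ?_) (sum_powerset_factorial_sub_card_le
    ((cardDistinctFactors_eq_card_primeFactors n).symm.trans_le
      (cardDistinctFactors_le_cardFactors n)))
  have hs : s ⊆ n.primeFactors := mem_powerset.1 hs
  have hdvd : s.val.prod ∣ n := by
    rw [prod_val]
    exact (prod_dvd_prod_of_subset _ _ id hs).trans (Nat.prod_primeFactors_dvd n)
  have hΩ := cardFactors_div_add_cardFactors hn hdvd
  rw [cardFactors_prod_of_prime fun p hp => Nat.prime_of_mem_primeFactors (hs hp)] at hΩ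
  exact (orderedPrimeFactorizations_le_factorial _).trans_eq (by rw [← hΩ, Nat.add_sub_cancel])

theorem two_le_sum_squarefree_divisors_orderedPrimeFactorizations {n : ℕ} (hn : 2 ≤ n) :
    2 ≤ ∑ d ∈ n.divisors with Squarefree d, M (n / d) := by
  have hp := Nat.minFac_prime (by omega : n ≠ 1)
  have hn0 : n ≠ 0 := by omega
  have hsub : {1, n.minFac} ⊆ n.divisors.filter Squarefree := by
    simp [insert_subset_iff, hp.squarefree, Nat.minFac_dvd, hn0]
  refine le_trans ?_ (sum_le_sum_of_subset hsub)
  rw [sum_pair hp.one_lt.ne]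
  have := orderedPrimeFactorizations_pos (n / 1)
  have := orderedPrimeFactorizations_pos (n / n.minFac)
  omega

variable (R : Type*)

def primeIndicator [Zero R] [One R] : ArithmeticFunction R :=
  ⟨fun n => if n.Prime then 1 else 0, if_neg Nat.not_prime_zero⟩

def signedOrderedPrimeFactorizations [Ring R] : ArithmeticFunction R :=
  ⟨fun n => if n = 0 then 0 else (-1) ^ Ω n * M n, if_pos rfl⟩

variable {R}

theorem primeIndicator_apply [Zero R] [One R] (n : ℕ) :
    primeIndicator R n = if n.Prime then 1 else 0 :=
  rfl

theorem primeIndicator_mul_apply [Semiring R] (f : ArithmeticFunction R) (n : ℕ) :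
    (primeIndicator R * f) n = ∑ p ∈ n.primeFactors, f (n / p) := by
  rw [mul_apply, Nat.sum_divisorsAntidiagonal fun a b => primeIndicator R a * f b]
  simp only [primeIndicator_apply, ite_mul, one_mul, zero_mul]
  rw [← sum_filter]
  congr 1
  ext p
  simp [Nat.mem_primeFactors, and_comm]

theorem primeIndicator_mul_zeta_apply [Semiring R] (n : ℕ) :
    (primeIndicator R * ζ) n = ω n := by
  rw [primeIndicator_mul_apply, cardDistinctFactors_eq_card_primeFactors, card_eq_sum_ones,
    Nat.cast_sum, Nat.cast_one]
  refine sum_congr rfl fun p hp => ?_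
  have hp0 : n / p ≠ 0 :=
    (Nat.div_pos (Nat.le_of_mem_primeFactors hp) (Nat.pos_of_mem_primeFactors hp)).ne'
  rw [natCoe_apply, zeta_apply_ne hp0, Nat.cast_one]

theorem one_add_primeIndicator_mul_zeta_apply [Semiring R] {n : ℕ} (hn : n ≠ 0) :
    ((1 + primeIndicator R) * ζ) n = ω n + 1 := by
  rw [add_mul, one_mul, add_apply, primeIndicator_mul_zeta_apply, natCoe_apply, zeta_apply_ne hn,
    Nat.cast_one, add_comm]

theorem signedOrderedPrimeFactorizations_apply [Ring R] {n : ℕ} (hn : n ≠ 0) :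
    signedOrderedPrimeFactorizations R n = (-1) ^ Ω n * M n :=
  if_neg hn

theorem one_add_primeIndicator_mul_signedOrderedPrimeFactorizations [Ring R] :
    (1 + primeIndicator R) * signedOrderedPrimeFactorizations R = 1 := by
  ext n
  rcases lt_trichotomy n 1 with h | rfl | h
  · simp [Nat.lt_one_iff.1 h]
  · simp [primeIndicator_apply, Nat.not_prime_one, signedOrderedPrimeFactorizations_apply,
      orderedPrimeFactorizations_of_le_one]
  have hsign : ∀ p ∈ n.primeFactors, signedOrderedPrimeFactorizations R (n / p) =
      -((-1) ^ Ω n * M (n / p)) := fun p hp => by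
    rw [signedOrderedPrimeFactorizations_apply
      (Nat.div_pos (Nat.le_of_mem_primeFactors hp) (Nat.pos_of_mem_primeFactors hp)).ne',
      ← cardFactors_div_add_one hp, pow_succ]
    simp
  rw [add_mul, one_mul, add_apply, primeIndicator_mul_apply, sum_congr rfl hsign, sum_neg_distrib,
    ← mul_sum, ← Nat.cast_sum, ← orderedPrimeFactorizations_of_one_lt h,
    signedOrderedPrimeFactorizations_apply (by omega), one_apply_ne h.ne', add_neg_cancel]

theorem moebius_mul_signedOrderedPrimeFactorizations_apply [CommRing R] {n : ℕ} (hn : n ≠ 0) :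
    (μ * signedOrderedPrimeFactorizations R) n =
      (-1) ^ Ω n * ∑ d ∈ n.divisors with Squarefree d, (M (n / d) : R) := by
  rw [mul_apply, Nat.sum_divisorsAntidiagonal fun a b =>
    (μ : ArithmeticFunction R) a * signedOrderedPrimeFactorizations R b, mul_sum, sum_filter]
  refine sum_congr rfl fun d hd => ?_
  have hdvd := Nat.dvd_of_mem_divisors hd
  split_ifs with hsq
  · rw [intCoe_apply, moebius_apply_of_squarefree hsq, signedOrderedPrimeFactorizations_apply
      ((Nat.div_ne_zero_iff_of_dvd hdvd).2 ⟨hn, hsq.ne_zero⟩),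
      ← cardFactors_div_add_cardFactors hn hdvd]
    push_cast
    ring
  · rw [intCoe_apply, moebius_eq_zero_of_not_squarefree hsq, Int.cast_zero, zero_mul]

end ArithmeticFunction

open ArithmeticFunction

/-- Let `g` be the arithmetic function with `g(n) = ω(n) + 1` for `n ≥ 1`
and let `ginv` be its Dirichlet inverse (characterized by `g * ginv = 1`).  If `n ≥ 2` and
`Ω(n) = k`, then `2 ≤ |ginv(n)| ≤ ∑_{j=0}^{k} C(k, j) · j!`. -/
theorem stmt_7 (g ginv : ArithmeticFunction ℝ)
    (hg : ∀ n : ℕ, 0 < n → g n = (ArithmeticFunction.cardDistinctFactors n : ℝ) + 1)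
    (hginv : g * ginv = 1) (n k : ℕ) (hn : 2 ≤ n)
    (hk : ArithmeticFunction.cardFactors n = k) :
    2 ≤ |ginv n| ∧
      |ginv n| ≤ ∑ j ∈ Finset.range (k + 1), ((k.choose j * j.factorial : ℕ) : ℝ) := by
  have hg_eq : g = (1 + primeIndicator ℝ) * ζ := by
    ext m
    rcases m.eq_zero_or_pos with rfl | hm
    · simp
    rw [hg m hm, one_add_primeIndicator_mul_zeta_apply hm.ne']
  have hginv_eq : ginv = μ * signedOrderedPrimeFactorizations ℝ := by
    refine (left_inv_eq_right_inv ?_ hginv).symm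
    rw [hg_eq, mul_mul_mul_comm, mul_comm _ (1 + _), mul_mul_mul_comm,
      one_add_primeIndicator_mul_signedOrderedPrimeFactorizations, coe_moebius_mul_coe_zeta,
      one_mul]
  have habs : |ginv n| = ((∑ d ∈ n.divisors with Squarefree d,
      orderedPrimeFactorizations (n / d) : ℕ) : ℝ) := by
    rw [hginv_eq, moebius_mul_signedOrderedPrimeFactorizations_apply (by omega), abs_mul,
      abs_pow, abs_neg, abs_one, one_pow, one_mul, ← Nat.cast_sum, Nat.abs_cast]
  rw [habs, ← Nat.cast_sum, ← hk]
  exact ⟨mod_cast two_le_sum_squarefree_divisors_orderedPrimeFactorizations hn,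
    mod_cast sum_squarefree_divisors_orderedPrimeFactorizations_le (by omega)⟩
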